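/- Let (σ_n) be a sequence of positive reals with σ_n → 0, let H and H_{σ_n} be self-adjoint operators on a Hilbert space such that H_{σ_n} → H in the norm resolvent sense, let E_{σ_n} → E in ℝ with E = inf spec(H), and let Φ_{σ_n} be unit vectors with H_{σ_n}Φ_{σ_n} = E_{σ_n}Φ_{σ_n}. If Φ_{σ_n} converges weakly to some Φ ∈ H, then Φ ∈ dom(H) and HΦ = EΦ. -/

import Mathlib

/-!
If `Hₙ φₙ = Eₙ φₙ` and `Rₙ = (Hₙ - i)⁻¹`, then `Rₙ φₙ = (Eₙ - i)⁻¹ φₙ`. Norm convergence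
`Rₙ → R` together with `‖φₙ‖ = 1` carries the weak convergence `φₙ ⇀ φ` over to
`Rₙ φₙ ⇀ R φ`, while the right-hand side converges weakly to `(E - i)⁻¹ φ`. Hence
`R φ = (E - i)⁻¹ φ`, so `φ` lies in the range of `R`, which is the domain of `H`, and
applying `H - i` gives `H φ = E φ`.
-/

open Filter Topology

section WeakConvergence

variable {𝕜 E : Type*} [RCLike 𝕜] [NormedAddCommGroup E] [InnerProductSpace 𝕜 E] {ι : Type*}
  {l : Filter ι}

variable (𝕜 l) in
def TendstoWeakly (x : ι → E) (a : E) : Prop :=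
  ∀ y : E, Tendsto (fun n => inner 𝕜 y (x n)) l (𝓝 (inner 𝕜 y a))

theorem TendstoWeakly.unique [l.NeBot] {x : ι → E} {a b : E} (ha : TendstoWeakly 𝕜 l x a)
    (hb : TendstoWeakly 𝕜 l x b) : a = b :=
  ext_inner_left 𝕜 fun y => tendsto_nhds_unique (ha y) (hb y)

theorem TendstoWeakly.smul {c : ι → 𝕜} {c₀ : 𝕜} {x : ι → E} {a : E} (hc : Tendsto c l (𝓝 c₀))
    (hx : TendstoWeakly 𝕜 l x a) : TendstoWeakly 𝕜 l (fun n => c n • x n) (c₀ • a) := fun y => by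
  simpa only [inner_smul_right] using hc.mul (hx y)

variable {F : Type*} [NormedAddCommGroup F] [InnerProductSpace 𝕜 F] [CompleteSpace E]
  [CompleteSpace F]

theorem TendstoWeakly.map {x : ι → E} {a : E} (hx : TendstoWeakly 𝕜 l x a) (T : E →L[𝕜] F) :
    TendstoWeakly 𝕜 l (fun n => T (x n)) (T a) := fun y => by
  simpa only [ContinuousLinearMap.adjoint_inner_left] using hx (ContinuousLinearMap.adjoint T y)

theorem TendstoWeakly.map_of_tendsto_opNorm {T : ι → E →L[𝕜] F} {T₀ : E →L[𝕜] F}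
    (hT : Tendsto (fun n => ‖T n - T₀‖) l (𝓝 0)) {x : ι → E} {a : E} {C : ℝ}
    (hC : ∀ n, ‖x n‖ ≤ C) (hx : TendstoWeakly 𝕜 l x a) :
    TendstoWeakly 𝕜 l (fun n => T n (x n)) (T₀ a) := by
  intro y
  have herr : Tendsto (fun n => inner 𝕜 y ((T n - T₀) (x n))) l (𝓝 0) := by
    refine squeeze_zero_norm (a := fun n => ‖y‖ * (‖T n - T₀‖ * C)) (fun n => ?_) ?_
    · calc ‖inner 𝕜 y ((T n - T₀) (x n))‖ ≤ ‖y‖ * ‖(T n - T₀) (x n)‖ := norm_inner_le_norm _ _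
        _ ≤ ‖y‖ * (‖T n - T₀‖ * C) := by
          gcongr
          exact (T n - T₀).le_of_opNorm_le_of_le le_rfl (hC n)
    · simpa using tendsto_const_nhds.mul (hT.mul_const C)
  simpa [inner_sub_right] using herr.add (hx.map T₀ y)

end WeakConvergence

namespace LinearPMap

variable {𝕜 E : Type*} [Field 𝕜] [AddCommGroup E] [Module 𝕜 E] {T : E →ₗ.[𝕜] E}
  {R : E →ₗ[𝕜] E} {z μ : 𝕜} {x : E}

theorem resolvent_apply_of_apply_eq_smul (hR : ∀ y : T.domain, R (T y - z • (y : E)) = y)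
    (hx : x ∈ T.domain) (hTx : T ⟨x, hx⟩ = μ • x) (hμz : μ ≠ z) : R x = (μ - z)⁻¹ • x := by
  have h := hR ⟨x, hx⟩
  rw [hTx, ← sub_smul, R.map_smul] at h
  exact (eq_inv_smul_iff₀ (sub_ne_zero.2 hμz)).2 h

theorem apply_eq_smul_of_resolvent_apply_eq_smul
    (hR : ∀ y : E, ∃ hy : R y ∈ T.domain, T ⟨R y, hy⟩ - z • R y = y)
    (hRx : R x = μ • x) (hμ : μ ≠ 0) : ∃ hx : x ∈ T.domain, T ⟨x, hx⟩ = (z + μ⁻¹) • x := by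
  obtain ⟨hRx_mem, hTRx⟩ := hR x
  have hx_eq : x = μ⁻¹ • R x := (eq_inv_smul_iff₀ hμ).2 hRx.symm
  have hx : x ∈ T.domain := hx_eq ▸ T.domain.smul_mem _ hRx_mem
  refine ⟨hx, ?_⟩
  have hsub : (⟨x, hx⟩ : T.domain) = μ⁻¹ • ⟨R x, hRx_mem⟩ := Subtype.ext hx_eq
  rw [hsub, T.map_smul, eq_add_of_sub_eq hTRx, smul_add, smul_comm μ⁻¹ z, ← hx_eq, add_smul,
    add_comm]

end LinearPMap

theorem weak_limit_of_ground_states_is_eigenvector_general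
    {H : Type*} [NormedAddCommGroup H] [InnerProductSpace ℂ H] [CompleteSpace H]
    (Hop : H →ₗ.[ℂ] H) (Hn : ℕ → H →ₗ.[ℂ] H)
    (R : H →L[ℂ] H) (Rn : ℕ → H →L[ℂ] H)
    (hR : (∀ x : H, ∃ hx : R x ∈ Hop.domain, Hop ⟨R x, hx⟩ - Complex.I • R x = x) ∧
      (∀ y : Hop.domain, R (Hop y - Complex.I • (y : H)) = y))
    (hRn : ∀ n, (∀ x : H, ∃ hx : Rn n x ∈ (Hn n).domain,
        Hn n ⟨Rn n x, hx⟩ - Complex.I • Rn n x = x) ∧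
      (∀ y : (Hn n).domain, Rn n (Hn n y - Complex.I • (y : H)) = y))
    (hconv : Tendsto (fun n => ‖Rn n - R‖) atTop (nhds 0))
    (E : ℝ) (En : ℕ → ℝ)
    (hEconv : Tendsto En atTop (nhds E))
    (Φn : ℕ → H) (hnorm : ∀ n, ‖Φn n‖ = 1)
    (heig : ∀ n, ∃ hdom : Φn n ∈ (Hn n).domain,
      Hn n ⟨Φn n, hdom⟩ = ((En n : ℂ)) • Φn n)
    (Φ : H)
    (hweak : ∀ y : H, Tendsto (fun n => (inner ℂ y (Φn n) : ℂ)) atTop (nhds (inner ℂ y Φ))) :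
    ∃ hdom : Φ ∈ Hop.domain, Hop ⟨Φ, hdom⟩ = (E : ℂ) • Φ := by
  have hweak : TendstoWeakly ℂ atTop Φn Φ := hweak
  have hofReal_ne_I : ∀ r : ℝ, (r : ℂ) ≠ Complex.I := fun r h => by
    simpa using congrArg Complex.im h
  have hRnΦn : ∀ n, Rn n (Φn n) = ((En n : ℂ) - Complex.I)⁻¹ • Φn n := fun n =>
    have ⟨hdom, hHn⟩ := heig n
    LinearPMap.resolvent_apply_of_apply_eq_smul (R := (Rn n).toLinearMap) (hRn n).2 hdom hHn
      (hofReal_ne_I (En n))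
  have hcoef : Tendsto (fun n => ((En n : ℂ) - Complex.I)⁻¹) atTop (𝓝 (((E : ℂ) - Complex.I)⁻¹)) :=
    ((Complex.continuous_ofReal.tendsto E).comp hEconv).sub_const _ |>.inv₀
      (sub_ne_zero.2 (hofReal_ne_I E))
  have hRΦ : R Φ = ((E : ℂ) - Complex.I)⁻¹ • Φ :=
    (hweak.map_of_tendsto_opNorm hconv fun n => (hnorm n).le).unique
      (by simpa only [hRnΦn] using hweak.smul hcoef)
  obtain ⟨hdom, hHΦ⟩ := LinearPMap.apply_eq_smul_of_resolvent_apply_eq_smul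
    (R := R.toLinearMap) hR.1 hRΦ (inv_ne_zero (sub_ne_zero.2 (hofReal_ne_I E)))
  exact ⟨hdom, by rwa [inv_inv, add_sub_cancel] at hHΦ⟩

/-- Let `σ_n → 0⁺`, let `Hop`, `Hn n` be self-adjoint operators with `Hn n → Hop`
in the norm resolvent sense (witnessed here by the resolvents at `z = i`), let `E_n → E` in `ℝ`
where `E = inf spec(Hop)` (expressed as the infimum of the quadratic form over unit vectors of
the domain), and let `Φ_n` be unit eigenvectors, `Hn n Φ_n = E_n Φ_n`.  If `Φ_n ⇀ Φ` weakly,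
then `Φ ∈ dom Hop` and `Hop Φ = EΦ`. -/
theorem weak_limit_of_ground_states_is_eigenvector
    {H : Type*} [NormedAddCommGroup H] [InnerProductSpace ℂ H] [CompleteSpace H]
    (σ : ℕ → ℝ) (hσpos : ∀ n, 0 < σ n) (hσ0 : Tendsto σ atTop (nhds 0))
    (Hop : H →ₗ.[ℂ] H) (Hn : ℕ → H →ₗ.[ℂ] H)
    (hHop : IsSelfAdjoint Hop) (hHn : ∀ n, IsSelfAdjoint (Hn n))
    (R : H →L[ℂ] H) (Rn : ℕ → H →L[ℂ] H)
    (hR : (∀ x : H, ∃ hx : R x ∈ Hop.domain, Hop ⟨R x, hx⟩ - Complex.I • R x = x) ∧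
      (∀ y : Hop.domain, R (Hop y - Complex.I • (y : H)) = y))
    (hRn : ∀ n, (∀ x : H, ∃ hx : Rn n x ∈ (Hn n).domain,
        Hn n ⟨Rn n x, hx⟩ - Complex.I • Rn n x = x) ∧
      (∀ y : (Hn n).domain, Rn n (Hn n y - Complex.I • (y : H)) = y))
    (hconv : Tendsto (fun n => ‖Rn n - R‖) atTop (nhds 0))
    (E : ℝ) (En : ℕ → ℝ)
    (hE : E = sInf {r : ℝ | ∃ Ψ : Hop.domain,
      ‖(Ψ : H)‖ = 1 ∧ (inner ℂ (Ψ : H) (Hop Ψ) : ℂ).re = r})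
    (hEconv : Tendsto En atTop (nhds E))
    (Φn : ℕ → H) (hnorm : ∀ n, ‖Φn n‖ = 1)
    (heig : ∀ n, ∃ hdom : Φn n ∈ (Hn n).domain,
      Hn n ⟨Φn n, hdom⟩ = ((En n : ℂ)) • Φn n)
    (Φ : H)
    (hweak : ∀ y : H, Tendsto (fun n => (inner ℂ y (Φn n) : ℂ)) atTop (nhds (inner ℂ y Φ))) :
    ∃ hdom : Φ ∈ Hop.domain, Hop ⟨Φ, hdom⟩ = (E : ℂ) • Φ :=
  weak_limit_of_ground_states_is_eigenvector_general Hop Hn R Rn hR hRn hconv E En hEconv Φn hnorm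
    heig Φ hweak
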